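/- arXiv:0807.1736 — 2 statements merged into one kernel-verified Lean document; each statement's English description precedes it below -/
import Mathlib

section
/- Let d ≥ 1 be an integer. There is a constant C = C(d) ≥ 1 such that the following holds for every integer N ≥ 1. Let β_0, β_1, …, β_d and α_0, α_1, …, α_d be real numbers such that β_d n^d + ⋯ + β_1 n + β_0 ≡ α_0 + α_1·binom(n,1) + ⋯ + α_d·binom(n,d) (mod 1) for every integer n. Then there is an integer q with 1 ≤ q ≤ C such that ‖q β_j‖_{ℝ/ℤ} ≤ C · N^{−j} · sup_{1 ≤ i ≤ d} N^{i} ‖α_i‖_{ℝ/ℤ} for every j = 1, …, d. -/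
/-!
Let `P(x) = ∑ β_j x^j`. The polynomial `P - ∑ α_k binom(x, k)` is integer-valued on `ℕ`, so its
iterated forward differences at `0` are integers, and Gregory–Newton interpolation rewrites `P` as
`∑ γ_k binom(x, k)` with `γ_k ≡ α_k (mod 1)`. Multiplying by `d!` clears the denominators of the
coefficients of `binom(x, k)`, so `d! β_j` is an integer combination of the `γ_k` with `k ≥ j`,
whence `‖d! β_j‖ ≤ C ∑_{k ≥ j} ‖α_k‖ ≤ C N^{-j} sup_i N^i ‖α_i‖`.
-/

open Polynomial Finset Nat Function fwdDiff

theorem fwdDiff_iter_mem_of_forall_mem {M G : Type*} [AddCommMonoid M] [AddCommGroup G]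
    (H : AddSubgroup G) {f : M → G} {h y : M} (hf : ∀ n : ℕ, f (y + n • h) ∈ H) (k : ℕ) :
    Δ_[h] ^[k] f y ∈ H := by
  rw [fwdDiff_iter_eq_sum_shift]
  exact H.sum_mem fun i _ => H.zsmul_mem (hf i) _

/-- The coefficient of `X ^ j` in `d ! * binom(X, k)`; for `k ≤ d` the division is exact. -/
noncomputable def factorialBinomialCoeff (d k j : ℕ) : ℤ :=
  (d ! / k ! : ℕ) * (descPochhammer ℤ k).coeff j

theorem factorialBinomialCoeff_eq_zero_of_lt {d k j : ℕ} (hkj : k < j) :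
    factorialBinomialCoeff d k j = 0 := by
  rw [factorialBinomialCoeff, coeff_eq_zero_of_natDegree_lt
    ((descPochhammer_natDegree ℤ k).trans_lt hkj), mul_zero]

namespace Polynomial

theorem eval_natCast_eq_sum_choose_mul_fwdDiff_iter {R : Type*} [CommRing R] {p : R[X]} {d : ℕ}
    (hp : p.natDegree ≤ d) (n : ℕ) :
    p.eval (n : R) = ∑ k ∈ range (d + 1), (n.choose k : R) * Δ_[1] ^[k] p.eval 0 := by
  have hn := shift_eq_sum_fwdDiff_iter 1 p.eval n 0
  simp only [zero_add, nsmul_eq_mul, mul_one] at hn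
  rw [hn, sum_subset (range_subset_range.mpr (by omega : n + 1 ≤ n + d + 1)),
    ← sum_subset (range_subset_range.mpr (by omega : d + 1 ≤ n + d + 1))]
  · intro k _ hk
    have hdk : p.natDegree < k := by simp only [mem_range, not_lt] at hk; omega
    rw [fwdDiff_iter_eq_zero_of_degree_lt hdk, Pi.zero_apply, mul_zero]
  · intro k _ hk
    have hnk : n < k := by simp only [mem_range, not_lt] at hk; omega
    rw [choose_eq_zero_of_lt hnk, cast_zero, zero_mul]

section binomialPoly

variable {K : Type*} [Field K]

/-- `∑_{k ≤ d} a k * binom(X, k)`. -/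
noncomputable def binomialPoly (d : ℕ) (a : ℕ → K) : K[X] :=
  ∑ k ∈ range (d + 1), C (a k / k !) * descPochhammer K k

theorem binomialPoly_add (d : ℕ) (a b : ℕ → K) :
    binomialPoly d (a + b) = binomialPoly d a + binomialPoly d b := by
  simp only [binomialPoly, ← sum_add_distrib, ← add_mul, ← C_add, Pi.add_apply, add_div]

theorem eval_binomialPoly (d : ℕ) (a : ℕ → K) (x : K) :
    (binomialPoly d a).eval x = ∑ k ∈ range (d + 1), a k * ((∏ t ∈ range k, (x - t)) / k !) := by
  simp only [binomialPoly, eval_finsetSum, eval_mul, eval_C, descPochhammer_eval_eq_prod_range]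
  exact sum_congr rfl fun k _ => by ring

theorem natDegree_binomialPoly_le (d : ℕ) (a : ℕ → K) : (binomialPoly d a).natDegree ≤ d :=
  natDegree_sum_le_of_forall_le _ _ fun k hk =>
    (natDegree_C_mul_le _ _).trans <| (descPochhammer_natDegree K k).trans_le <|
      Nat.lt_succ_iff.mp (mem_range.mp hk)

variable [CharZero K]

theorem eq_binomialPoly_fwdDiff_iter {p : K[X]} {d : ℕ} (hp : p.natDegree ≤ d) :
    p = binomialPoly d (fun k => Δ_[1] ^[k] p.eval 0) := by
  refine eq_of_infinite_eval_eq _ _ <|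
    (Set.infinite_range_of_injective Nat.cast_injective).mono ?_
  rintro _ ⟨n, rfl⟩
  simp only [Set.mem_ofPred_eq, binomialPoly, eval_finsetSum, eval_mul, eval_C,
    eval_natCast_eq_sum_choose_mul_fwdDiff_iter hp, cast_choose_eq_descPochhammer_div]
  exact sum_congr rfl fun k _ => by ring

theorem factorial_mul_coeff_binomialPoly (d : ℕ) (a : ℕ → K) (j : ℕ) :
    (d ! : K) * (binomialPoly d a).coeff j =
      ∑ k ∈ range (d + 1), factorialBinomialCoeff d k j • a k := by
  simp only [binomialPoly, finsetSum_coeff, coeff_C_mul, mul_sum]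
  refine sum_congr rfl fun k hk => ?_
  have hdvd : k ! ∣ d ! := factorial_dvd_factorial (Nat.lt_succ_iff.mp (mem_range.mp hk))
  rw [← descPochhammer_map (Int.castRingHom K), coeff_map, factorialBinomialCoeff, zsmul_eq_mul,
    Int.cast_mul, Int.cast_natCast, Nat.cast_div hdvd (cast_ne_zero.mpr k.factorial_ne_zero),
    eq_intCast]
  field_simp

end binomialPoly

end Polynomial

namespace AddCircle

variable {p : ℝ}

theorem exists_binomialPoly_eq_of_coe_eval_eq {P : ℝ[X]} {d : ℕ} (hP : P.natDegree ≤ d)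
    {α : ℕ → ℝ}
    (h : ∀ n : ℕ, ((P.eval (n : ℝ) : ℝ) : AddCircle p) = ((binomialPoly d α).eval (n : ℝ) : ℝ)) :
    ∃ γ : ℕ → ℝ, P = binomialPoly d γ ∧ ∀ k, (γ k : AddCircle p) = α k := by
  set R := P - binomialPoly d α
  have hR : R.natDegree ≤ d :=
    (natDegree_sub_le _ _).trans (max_le hP (natDegree_binomialPoly_le d α))
  refine ⟨α + fun k => Δ_[1] ^[k] R.eval 0, ?_, fun k => ?_⟩
  · rw [binomialPoly_add, ← eq_binomialPoly_fwdDiff_iter hR, add_sub_cancel]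
  · have hR_mem : ∀ n : ℕ, R.eval (0 + n • 1) ∈ AddSubgroup.zmultiples p := fun n => by
      rw [zero_add, nsmul_one, AddSubgroup.mem_zmultiples_iff, ← coe_eq_zero_iff, eval_sub,
        coe_sub, sub_eq_zero, h]
    obtain ⟨m, hm⟩ := AddSubgroup.mem_zmultiples_iff.mp <|
      fwdDiff_iter_mem_of_forall_mem (f := R.eval) (h := 1) (y := 0) _ hR_mem k
    rw [Pi.add_apply, coe_add, ← hm, coe_zsmul, coe_period, smul_zero, add_zero]

theorem coe_factorial_mul_eq_sum_zsmul {d j : ℕ} (hj : j ≤ d) {β α : ℕ → ℝ}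
    (h : ∀ n : ℕ, ((∑ i ∈ range (d + 1), β i * (n : ℝ) ^ i : ℝ) : AddCircle p) =
      ((binomialPoly d α).eval (n : ℝ) : ℝ)) :
    (((d ! : ℝ) * β j : ℝ) : AddCircle p) =
      ∑ k ∈ range (d + 1), factorialBinomialCoeff d k j • (α k : AddCircle p) := by
  set P : ℝ[X] := ∑ i ∈ range (d + 1), C (β i) * X ^ i
  have hP : P.natDegree ≤ d := natDegree_sum_le_of_forall_le _ _ fun i hi =>
    (natDegree_C_mul_X_pow_le _ _).trans (Nat.lt_succ_iff.mp (mem_range.mp hi))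
  obtain ⟨γ, hPγ, hγα⟩ := exists_binomialPoly_eq_of_coe_eval_eq hP fun n => by
    simpa [P, eval_finsetSum] using h n
  have hβγ : (d ! : ℝ) * β j = ∑ k ∈ range (d + 1), factorialBinomialCoeff d k j • γ k := by
    have hPj : P.coeff j = β j := by simp [P, finsetSum_coeff, Nat.lt_succ_iff.mpr hj]
    rw [← hPj, hPγ, factorial_mul_coeff_binomialPoly]
  simp only [hβγ, ← hγα, ← coe_zsmul]
  exact map_sum (QuotientAddGroup.mk' (AddSubgroup.zmultiples p)) _ _

end AddCircle

theorem norm_le_div_pow_of_pow_mul_norm_le {E : Type*} [SeminormedAddCommGroup E] {N S : ℝ}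
    (hN : 1 ≤ N) {j k : ℕ} (hjk : j ≤ k) {x : E} (hx : N ^ k * ‖x‖ ≤ S) : ‖x‖ ≤ S / N ^ j := by
  rw [le_div_iff₀ (by positivity)]
  calc ‖x‖ * N ^ j ≤ ‖x‖ * N ^ k := by gcongr
    _ ≤ S := by linarith

theorem norm_sum_factorialBinomialCoeff_zsmul_le {E : Type*} [SeminormedAddCommGroup E]
    {d j : ℕ} (hj : 1 ≤ j) {N S : ℝ} (hN : 1 ≤ N) {x : ℕ → E}
    (hS : ∀ k ∈ Icc 1 d, N ^ k * ‖x k‖ ≤ S) :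
    ‖∑ k ∈ range (d + 1), factorialBinomialCoeff d k j • x k‖ ≤
      (∑ k ∈ range (d + 1), |(factorialBinomialCoeff d k j : ℝ)|) * (S / N ^ j) := by
  rw [sum_mul]
  refine (norm_sum_le _ _).trans (sum_le_sum fun k hk => (norm_zsmul_le _ _).trans ?_)
  rw [Int.norm_eq_abs]
  rcases lt_or_ge k j with hkj | hjk
  · simp [factorialBinomialCoeff_eq_zero_of_lt hkj]
  · exact mul_le_mul_of_nonneg_left (norm_le_div_pow_of_pow_mul_norm_le hN hjk
      (hS k (mem_Icc.mpr ⟨hj.trans hjk, Nat.lt_succ_iff.mp (mem_range.mp hk)⟩))) (abs_nonneg _)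

/-- Lemma 3.1 (`smooth-coeff`): comparing coefficients in the monomial and
binomial-coefficient bases of a polynomial with values in ℝ/ℤ. -/
theorem stmt_1 (d : ℕ) (hd : 1 ≤ d) : ∃ C : ℝ, 1 ≤ C ∧
    ∀ (N : ℕ), 1 ≤ N → ∀ (β α : ℕ → ℝ),
      (∀ n : ℤ,
        ((∑ j ∈ Finset.range (d + 1), β j * (n : ℝ) ^ j : ℝ) : UnitAddCircle) =
        ((∑ i ∈ Finset.range (d + 1),
            α i * ((∏ t ∈ Finset.range i, ((n : ℝ) - (t : ℝ))) / (Nat.factorial i)) : ℝ) :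
          UnitAddCircle)) →
      ∃ q : ℕ, 1 ≤ q ∧ (q : ℝ) ≤ C ∧
        ∀ j ∈ Finset.Icc 1 d,
          ‖(((q : ℝ) * β j : ℝ) : UnitAddCircle)‖ ≤
            C * (N : ℝ) ^ (-(j : ℝ)) *
              (Finset.Icc 1 d).sup' (Finset.nonempty_Icc.mpr hd)
                (fun i => (N : ℝ) ^ (i : ℕ) * ‖((α i : ℝ) : UnitAddCircle)‖) := by
  set w := factorialBinomialCoeff d
  set A := ∑ j ∈ range (d + 1), ∑ k ∈ range (d + 1), |(w k j : ℝ)|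
  have hA : 0 ≤ A := by positivity
  have hfact : (1 : ℝ) ≤ d ! := mod_cast d.factorial_pos
  refine ⟨d ! + A, by linarith, fun N hN β α hβα =>
    ⟨d !, d.factorial_pos, le_add_of_nonneg_right hA, fun j hj => ?_⟩⟩
  obtain ⟨hj1, hjd⟩ := mem_Icc.mp hj
  set S := (Icc 1 d).sup' (nonempty_Icc.mpr hd) fun i => (N : ℝ) ^ i * ‖((α i : ℝ) : UnitAddCircle)‖
  have hS : 0 ≤ S := le_trans (by positivity) (le_sup' _ hj)
  have hwA : ∑ k ∈ range (d + 1), |(w k j : ℝ)| ≤ d ! + A :=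
    (single_le_sum (f := fun j => ∑ k ∈ range (d + 1), |(w k j : ℝ)|) (fun _ _ => by positivity)
      (mem_range.mpr (by omega))).trans (le_add_of_nonneg_left (by positivity))
  calc ‖(((d ! : ℕ) : ℝ) * β j : UnitAddCircle)‖
      = ‖∑ k ∈ range (d + 1), w k j • ((α k : ℝ) : UnitAddCircle)‖ := by
        rw [AddCircle.coe_factorial_mul_eq_sum_zsmul hjd fun n => by
          simpa [eval_binomialPoly] using hβα n]
    _ ≤ (∑ k ∈ range (d + 1), |(w k j : ℝ)|) * (S / (N : ℝ) ^ j) :=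
        norm_sum_factorialBinomialCoeff_zsmul_le hj1 (by exact_mod_cast hN)
          fun k hk => le_sup' (fun i => (N : ℝ) ^ i * ‖((α i : ℝ) : UnitAddCircle)‖) hk
    _ ≤ (d ! + A) * (N : ℝ) ^ (-(j : ℝ)) * S := by
        rw [Real.rpow_neg (by positivity), Real.rpow_natCast, mul_assoc, ← div_eq_inv_mul]
        gcongr
end

section
/- There exist constants c > 0 and C ≥ 1 such that for every integer K ≥ 1 and all integers k₁, k₂ with |k₁| ≤ K, |k₂| ≤ K and (k₁, k₂) ≠ (0, 0), one has ‖k₁√2 + k₂√3‖_{ℝ/ℤ} ≥ c · K^{−C}. -/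
/-!
Put `x = k₁√2 + k₂√3` and `m = round x`. The product of the four conjugates `±k₁√2 ± k₂√3 - m`
is the norm of `x - m` from `ℚ(√2, √3)`, an integer, and it is nonzero because `2`, `3` and `6`
are not squares. The three conjugates other than `x - m` are `O(K)`, so
`1 ≤ |x - m| · (9K)³`, i.e. `‖x‖_{ℝ/ℤ} ≥ K⁻³ / 729`.
-/

open Real

/-- The norm from `ℚ(√2, √3)` to `ℚ` of `a√2 + b√3 - m`. -/
def biquadNorm (a b m : ℤ) : ℤ := (3 * b ^ 2 + m ^ 2 - 2 * a ^ 2) ^ 2 - 12 * b ^ 2 * m ^ 2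

theorem biquadNorm_cast (a b m : ℤ) :
    (biquadNorm a b m : ℝ) = (a * √2 + b * √3 - m) * (-a * √2 + b * √3 - m) *
      (a * √2 + -b * √3 - m) * (-a * √2 + -b * √3 - m) := by
  have h2 : √2 ^ 2 = 2 := sq_sqrt (by norm_num)
  have h3 : √3 ^ 2 = 3 := sq_sqrt (by norm_num)
  rw [biquadNorm]
  push_cast
  linear_combination
    (a : ℝ) ^ 2 * (2 * b ^ 2 * √3 ^ 2 + 2 * m ^ 2 - a ^ 2 * √2 ^ 2 - 2 * a ^ 2) * h2
      - ((b : ℝ) ^ 2 * (b ^ 2 * √3 ^ 2 + 3 * b ^ 2 + 2 * m ^ 2 - 4 * a ^ 2)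
        - 4 * b ^ 2 * m ^ 2) * h3

theorem nonsquare_of_not_isSquare {d : ℕ} (hd : ¬IsSquare d) : Zsqrtd.Nonsquare d :=
  ⟨fun n h => hd ⟨n, h⟩⟩

theorem biquadNorm_ne_zero {a b : ℤ} (hab : ¬(a = 0 ∧ b = 0)) (m : ℤ) :
    biquadNorm a b m ≠ 0 := by
  intro h
  -- `biquadNorm a b m = X² - 3 (2bm)²` forces `bm = 0`, leaving `m² = 2a²` or `(3b)² = 6a²`.
  obtain ⟨hX, hbm⟩ := Zsqrtd.divides_sq_eq_zero_z (d := 3)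
    (dnsq := nonsquare_of_not_isSquare (by norm_num)) (x := 3 * b ^ 2 + m ^ 2 - 2 * a ^ 2)
    (y := 2 * b * m) (by rw [biquadNorm] at h; push_cast; linear_combination h)
  rcases mul_eq_zero.mp hbm with hb | rfl
  · obtain rfl : b = 0 := by simpa using hb
    obtain ⟨-, rfl⟩ := Zsqrtd.divides_sq_eq_zero_z (d := 2)
      (dnsq := nonsquare_of_not_isSquare (by norm_num)) (x := m) (y := a)
      (by push_cast; linear_combination hX)
    exact hab ⟨rfl, rfl⟩
  · obtain ⟨hb, rfl⟩ := Zsqrtd.divides_sq_eq_zero_z (d := 6)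
      (dnsq := nonsquare_of_not_isSquare (by norm_num)) (x := 3 * b) (y := a)
      (by push_cast; linear_combination 3 * hX)
    exact hab ⟨rfl, by simpa using hb⟩

theorem abs_mul_sqrt_two_add_mul_sqrt_three_le {a b K : ℝ} (ha : |a| ≤ K) (hb : |b| ≤ K) :
    |a * √2 + b * √3| ≤ 4 * K := by
  have h2 : √2 ≤ 2 := sqrt_le_iff.mpr ⟨by norm_num, by norm_num⟩
  have h3 : √3 ≤ 2 := sqrt_le_iff.mpr ⟨by norm_num, by norm_num⟩
  calc |a * √2 + b * √3| ≤ |a| * √2 + |b| * √3 := by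
        simpa [abs_mul, abs_of_nonneg (sqrt_nonneg _)] using abs_add_le (a * √2) (b * √3)
    _ ≤ K * 2 + K * 2 := by
        have := (abs_nonneg a).trans ha
        gcongr
    _ = 4 * K := by ring

theorem abs_conj_sub_round_le {a b a' b' K : ℝ} (ha : |a| ≤ K) (hb : |b| ≤ K)
    (ha' : |a'| ≤ K) (hb' : |b'| ≤ K) (hK : 1 / 2 ≤ K) :
    |a' * √2 + b' * √3 - round (a * √2 + b * √3)| ≤ 9 * K := by
  set x := a * √2 + b * √3
  calc |a' * √2 + b' * √3 - round x|
      ≤ |a' * √2 + b' * √3| + |x| + |x - round x| := by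
        linarith [abs_sub_le (a' * √2 + b' * √3) x (round x), abs_sub (a' * √2 + b' * √3) x]
    _ ≤ 4 * K + 4 * K + 1 / 2 := by
        gcongr
        exacts [abs_mul_sqrt_two_add_mul_sqrt_three_le ha' hb',
          abs_mul_sqrt_two_add_mul_sqrt_three_le ha hb, abs_sub_round x]
    _ ≤ 9 * K := by linarith

/-- Quantitative linear independence of `√2`, `√3` and `1` over ℚ. -/
theorem stmt_10 : ∃ c C : ℝ, 0 < c ∧ 1 ≤ C ∧
    ∀ (K : ℕ) (k₁ k₂ : ℤ), 1 ≤ K → |k₁| ≤ (K : ℤ) → |k₂| ≤ (K : ℤ) →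
      ¬(k₁ = 0 ∧ k₂ = 0) →
      c * (K : ℝ) ^ (-C) ≤
        ‖(((k₁ : ℝ) * Real.sqrt 2 + (k₂ : ℝ) * Real.sqrt 3 : ℝ) : UnitAddCircle)‖ := by
  refine ⟨1 / 729, 3, by norm_num, by norm_num, fun K k₁ k₂ hK hk₁ hk₂ hne => ?_⟩
  have hK : (1 : ℝ) ≤ K := by exact_mod_cast hK
  have ha : |(k₁ : ℝ)| ≤ K := by exact_mod_cast hk₁
  have hb : |(k₂ : ℝ)| ≤ K := by exact_mod_cast hk₂
  have hconj {a' b' : ℝ} (ha' : |a'| ≤ K) (hb' : |b'| ≤ K) :=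
    abs_conj_sub_round_le ha hb ha' hb' (by linarith)
  set x := (k₁ : ℝ) * √2 + k₂ * √3
  have key : 1 ≤ |x - round x| * (9 * K) ^ 3 := calc
    (1 : ℝ) ≤ |(biquadNorm k₁ k₂ (round x) : ℝ)| := by
      exact_mod_cast Int.one_le_abs (biquadNorm_ne_zero hne _)
    _ = |x - round x| * |-k₁ * √2 + k₂ * √3 - round x| * |k₁ * √2 + -k₂ * √3 - round x| *
          |-k₁ * √2 + -k₂ * √3 - round x| := by
      rw [biquadNorm_cast, abs_mul, abs_mul, abs_mul]
    _ ≤ |x - round x| * (9 * K) * (9 * K) * (9 * K) := by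
      gcongr <;> apply hconj <;> simpa only [abs_neg]
    _ = |x - round x| * (9 * K) ^ 3 := by ring
  rw [UnitAddCircle.norm_eq, rpow_neg_ofNat, zpow_neg, zpow_ofNat]
  calc 1 / 729 * ((K : ℝ) ^ 3)⁻¹ = 1 / (9 * K) ^ 3 := by ring
    _ ≤ |x - round x| := by rwa [div_le_iff₀ (by positivity)]
end
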